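/- An m × n matrix A over T (m ≤ n) whose rows are tropically independent has an m × m submatrix (choice of m columns) that is tropically nonsingular. -/

import Mathlib

/-- The extended tropical semiring `T = ℝ ∪ ℝ^ν ∪ {-∞}`:
`bot` is `-∞`, `real a` is the real element `a`, `ghost a` is `a^ν`. -/
inductive T : Type where
  | bot : T
  | real : ℝ → T
  | ghost : ℝ → T

namespace T

noncomputable section

/-- Tropical addition `⊕` (max with respect to `-∞ ≺ a ≺ a^ν`, ties become ghosts). -/
def add : T → T → T
  | bot, y => y
  | real a, bot => real a
  | ghost a, bot => ghost a
  | real a, real b => if a < b then real b else if b < a then real a else ghost a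
  | real a, ghost b => if b < a then real a else ghost b
  | ghost a, real b => if a < b then real b else ghost a
  | ghost a, ghost b => ghost (max a b)

/-- Tropical multiplication `⊙` (addition of underlying reals, ghosts absorb). -/
def mul : T → T → T
  | bot, _ => bot
  | real _, bot => bot
  | ghost _, bot => bot
  | real a, real b => real (a + b)
  | real a, ghost b => ghost (a + b)
  | ghost a, real b => ghost (a + b)
  | ghost a, ghost b => ghost (a + b)

/-- The total order `⪯` on `T`: `-∞` least, order of reals, `a ≺ a^ν`. -/
def le : T → T → Prop
  | bot, _ => True
  | real _, bot => False
  | real a, real b => a ≤ b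
  | real a, ghost b => a ≤ b
  | ghost _, bot => False
  | ghost a, real b => a < b
  | ghost a, ghost b => a ≤ b

/-- Membership in the ghost ideal `U̅ = U ∪ {-∞}`. -/
def IsGhost : T → Prop
  | bot => True
  | real _ => False
  | ghost _ => True

/-- Membership in `ℝ ∪ {-∞}` (non-ghost elements). -/
def RealOrBot : T → Prop
  | bot => True
  | real _ => True
  | ghost _ => False

/-- The ghost map `ν`. -/
def nu : T → T
  | bot => bot
  | real a => ghost a
  | ghost a => ghost a

/-- Tropical sum of a list. -/
def sumList : List T → T := fun l => l.foldr add bot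

/-- Tropical sum over a finite index set. -/
def sum {α : Type*} (s : Finset α) (f : α → T) : T := sumList (s.toList.map f)

/-- Tropical product of a list. -/
def prodList : List T → T := fun l => l.foldr mul (real 0)

/-- The weight of a permutation `σ` in a matrix: `a_{1,σ(1)} ⊙ ⋯ ⊙ a_{n,σ(n)}`. -/
def permProd {n : ℕ} (A : Matrix (Fin n) (Fin n) T) (σ : Equiv.Perm (Fin n)) : T :=
  prodList ((List.finRange n).map fun i => A i (σ i))

/-- The tropical determinant (permanent) `|A| = ⨁_σ a_{1,σ(1)} ⊙ ⋯ ⊙ a_{n,σ(n)}`. -/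
def det {n : ℕ} (A : Matrix (Fin n) (Fin n) T) : T :=
  sum (Finset.univ : Finset (Equiv.Perm (Fin n))) (fun σ => permProd A σ)

/-- Tropical dependence of a family of `m` vectors in `T^(n)`:
some tropical linear combination with coefficients in `ℝ ∪ {-∞}`, not all `-∞`,
lands in the ghost part `U̅^(n)`. -/
def Dependent {m n : ℕ} (v : Fin m → Fin n → T) : Prop :=
  ∃ α : Fin m → T, (∀ i, RealOrBot (α i)) ∧ (∃ i, α i ≠ bot) ∧
    ∀ j, IsGhost (sum Finset.univ fun i => mul (α i) (v i j))

/-- The tropical rank: maximal number of tropically independent rows. -/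
def rk {m n : ℕ} (A : Matrix (Fin m) (Fin n) T) : ℕ :=
  sSup {k | ∃ f : Fin k → Fin m, Function.Injective f ∧ ¬ Dependent (fun i => A (f i))}

end

end T

/-!
Contrapositively, if every maximal minor of `A` is ghost we build a nonzero ghost combination
of the rows, by strong induction on the number of tangible entries. A row without tangible
entries is such a combination by itself. Ghostifying a tangible entry, the induction hypothesis
gives a combination that is ghost except possibly at that one entry; two tangible entries in a
common column, or in a common row, yield two such combinations whose pointwise maximum, after a
suitable shift of one of them, is ghost everywhere. Otherwise every row `i` has exactly one
tangible entry, in pairwise distinct columns `c i`. The minor on these columns is ghost, so some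
permutation `σ ≠ 1` weighs at least as much as the diagonal, and a potential along `σ` makes
each row `i` tie with row `σ⁻¹ i` in column `c i`.
-/

theorem WithBot.exists_coe_add_eq {α : Type*} [AddCommGroup α] {a b : WithBot α} (ha : a ≠ ⊥)
    (hb : b ≠ ⊥) : ∃ t : α, ↑t + a = b := by
  lift a to α using ha
  lift b to α using hb
  exact ⟨b - a, by rw [← WithBot.coe_add, sub_add_cancel]⟩

namespace Equiv.Perm

variable {α : Type*} {σ : Perm α} {k : ℕ}

lemma sum_range_pow_apply_apply (hk : σ ^ k = 1) (e : α → ℝ) (x : α) :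
    ∑ s ∈ Finset.range k, e ((σ ^ s) (σ x)) = ∑ s ∈ Finset.range k, e ((σ ^ s) x) := by
  have := Finset.sum_range_succ' (fun s => e ((σ ^ s) x)) k
  rw [Finset.sum_range_succ, hk, pow_zero] at this
  simp only [← Perm.mul_apply, ← pow_succ]
  linarith

lemma sum_range_mul_pow_apply_apply (hk : σ ^ k = 1) (e : α → ℝ) (x : α) :
    ∑ s ∈ Finset.range k, s * e ((σ ^ s) (σ x)) =
      ∑ s ∈ Finset.range k, s * e ((σ ^ s) x) + k * e x -
        ∑ s ∈ Finset.range k, e ((σ ^ s) x) := by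
  have := Finset.sum_range_succ' (fun s => (s : ℝ) * e ((σ ^ s) x)) k
  rw [Finset.sum_range_succ, hk] at this
  simp only [Nat.cast_add, Nat.cast_one, add_mul, one_mul, Finset.sum_add_distrib, Nat.cast_zero,
    zero_mul, add_zero, Perm.one_apply] at this
  rw [← sum_range_pow_apply_apply hk]
  simp only [← Perm.mul_apply, ← pow_succ]
  linarith

theorem exists_potential_of_sum_nonneg [Fintype α] (hσ : σ ≠ 1) (e : α → ℝ)
    (he : ∀ x, σ x = x → e x = 0) (hsum : 0 ≤ ∑ x, e x) :
    ∃ (P : α → Prop) (p : α → ℝ), (∃ x, P x) ∧ (∀ x, P (σ x) ↔ P x) ∧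
      (∀ x, P x → σ x ≠ x) ∧ ∀ x, P x → p (σ x) ≤ p x + e x := by
  set k := orderOf σ
  have hk : (0 : ℝ) < k := Nat.cast_pos.2 (orderOf_pos σ)
  have hσk : σ ^ k = 1 := pow_orderOf_eq_one σ
  -- `p = G / k` satisfies `p (σ x) = p x + e x - S x / k`, where `S x` is the sum of `e` over
  -- `k` steps of the orbit of `x`; the `S x` add up to `k * ∑ e ≥ 0`.
  set S : α → ℝ := fun x => ∑ s ∈ Finset.range k, e ((σ ^ s) x)
  set G : α → ℝ := fun x => ∑ s ∈ Finset.range k, s * e ((σ ^ s) x)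
  have hSsum : ∑ x, S x = k * ∑ x, e x := by
    simp only [S]
    rw [Finset.sum_comm]
    simp [Equiv.sum_comp]
  have hfix : ∀ x, σ x = x → S x = 0 := fun x hx => by
    simp [S, pow_apply_eq_self_of_apply_eq_self hx, he x hx]
  refine ⟨fun x => σ x ≠ x ∧ 0 ≤ S x, fun x => G x / k, ?_, fun x => ?_, fun x hx => hx.1,
    fun x hx => ?_⟩
  · by_contra! hneg
    obtain ⟨x₀, hx₀⟩ : ∃ x, σ x ≠ x := by
      by_contra! h
      exact hσ (Equiv.ext h)
    have hle : ∀ x, S x ≤ 0 := fun x => by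
      by_cases hx : σ x = x
      · exact (hfix x hx).le
      · exact (hneg x hx).le
    have : ∑ x, S x < ∑ _x : α, (0 : ℝ) :=
      Finset.sum_lt_sum (fun x _ => hle x) ⟨x₀, Finset.mem_univ _, hneg x₀ hx₀⟩
    rw [Finset.sum_const_zero, hSsum] at this
    exact this.not_ge (mul_nonneg hk.le hsum)
  · simp only [S, sum_range_pow_apply_apply hσk, ne_eq, σ.injective.eq_iff]
  · show G (σ x) / k ≤ G x / k + e x
    simp only [G, sum_range_mul_pow_apply_apply hσk]
    rw [sub_div, add_div, mul_div_cancel_left₀ _ hk.ne']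
    linarith [div_nonneg hx.2 hk.le]

end Equiv.Perm

namespace T

/-- The ν-value: `a` and `a^ν` have value `a`, and `-∞` has value `⊥`. -/
def val : T → WithBot ℝ
  | bot => ⊥
  | real a => a
  | ghost a => a

lemma val_ne_bot_of_not_isGhost {x : T} (hx : ¬IsGhost x) : val x ≠ ⊥ := by
  cases x <;> simp_all [IsGhost, val]

lemma val_add (x y : T) : val (add x y) = max (val x) (val y) := by
  rcases x with _ | a | a <;> rcases y with _ | b | b <;> simp only [add] <;> (try split_ifs) <;>
    simp only [val, ← WithBot.coe_max, WithBot.coe_inj, max_bot_left, max_bot_right, max_self] <;>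
    grind

lemma not_isGhost_add_iff {x y : T} :
    ¬IsGhost (add x y) ↔ (¬IsGhost x ∧ val y < val x) ∨ (¬IsGhost y ∧ val x < val y) := by
  rcases x with _ | a | a <;> rcases y with _ | b | b <;> simp only [add] <;> (try split_ifs) <;>
    simp only [IsGhost, val, WithBot.coe_lt_coe, WithBot.bot_lt_coe, lt_self_iff_false,
      not_lt_bot] <;>
    grind

lemma val_mul (x y : T) : val (mul x y) = val x + val y := by
  cases x <;> cases y <;> simp [mul, val, ← WithBot.coe_add]

lemma not_isGhost_mul_iff {x y : T} : ¬IsGhost (mul x y) ↔ ¬IsGhost x ∧ ¬IsGhost y := by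
  cases x <;> cases y <;> simp [mul, IsGhost]

@[simp] lemma val_nu (x : T) : val (nu x) = val x := by cases x <;> rfl

@[simp] lemma isGhost_nu (x : T) : IsGhost (nu x) := by cases x <;> trivial

section Sums

variable {ι : Type*}

lemma val_sumList_map [DecidableEq ι] (l : List ι) (f : ι → T) :
    val (sumList (l.map f)) = l.toFinset.sup (val ∘ f) := by
  induction l with
  | nil => rfl
  | cons a l ih =>
    simp only [sumList, List.map_cons, List.foldr_cons] at ih ⊢
    rw [val_add, ih, List.toFinset_cons, Finset.sup_insert]
    rfl

lemma not_isGhost_sumList_map_iff {l : List ι} (hl : l.Nodup) (f : ι → T) :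
    ¬IsGhost (sumList (l.map f)) ↔
      ∃ i ∈ l, ¬IsGhost (f i) ∧ ∀ i' ∈ l, i' ≠ i → val (f i') < val (f i) := by
  classical
  induction l with
  | nil => simp [sumList, IsGhost]
  | cons a l ih =>
    obtain ⟨hal, hl⟩ := List.nodup_cons.1 hl
    have hsum : sumList ((a :: l).map f) = add (f a) (sumList (l.map f)) := rfl
    have hsup : ∀ i ∈ l, (∀ i' ∈ l, i' ≠ i → val (f i') < val (f i)) →
        l.toFinset.sup (val ∘ f) = val (f i) := fun i hi hmax =>
      le_antisymm
        (Finset.sup_le fun j hj => by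
          by_cases hji : j = i
          · rw [hji]; rfl
          · exact (hmax j (List.mem_toFinset.1 hj) hji).le)
        (Finset.le_sup (f := val ∘ f) (List.mem_toFinset.2 hi))
    rw [hsum, not_isGhost_add_iff, ih hl, val_sumList_map]
    constructor
    · rintro (⟨ha, hlt⟩ | ⟨⟨i, hi, hgi, hmax⟩, hlt⟩)
      · refine ⟨a, List.mem_cons_self, ha, fun i' hi' hne => ?_⟩
        have hi'l : i' ∈ l := (List.mem_cons.1 hi').resolve_left hne
        exact (Finset.le_sup (f := val ∘ f) (List.mem_toFinset.2 hi'l)).trans_lt hlt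
      · refine ⟨i, List.mem_cons_of_mem _ hi, hgi, fun i' hi' hne => ?_⟩
        rcases List.mem_cons.1 hi' with rfl | hi'
        · rwa [hsup i hi hmax] at hlt
        · exact hmax i' hi' hne
    · rintro ⟨i, hi, hgi, hmax⟩
      rcases List.mem_cons.1 hi with rfl | hi
      · refine Or.inl ⟨hgi, (Finset.sup_lt_iff (bot_lt_iff_ne_bot.2
          (val_ne_bot_of_not_isGhost hgi))).2 fun j hj => ?_⟩
        rw [List.mem_toFinset] at hj
        exact hmax j (List.mem_cons_of_mem _ hj) (by rintro rfl; exact hal hj)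
      · have hmax' : ∀ i' ∈ l, i' ≠ i → val (f i') < val (f i) :=
          fun i' hi' => hmax i' (List.mem_cons_of_mem _ hi')
        refine Or.inr ⟨⟨i, hi, hgi, hmax'⟩, ?_⟩
        rw [hsup i hi hmax']
        exact hmax a List.mem_cons_self (by rintro rfl; exact hal hi)

lemma not_isGhost_sum_iff (s : Finset ι) (f : ι → T) :
    ¬IsGhost (sum s f) ↔ ∃ i ∈ s, ¬IsGhost (f i) ∧ ∀ i' ∈ s, i' ≠ i → val (f i') < val (f i) := by
  simpa only [sum, Finset.mem_toList] using not_isGhost_sumList_map_iff s.nodup_toList f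

end Sums

lemma val_prodList (l : List T) : val (prodList l) = (l.map val).sum := by
  induction l with
  | nil => rfl
  | cons a l ih =>
    simp only [prodList, List.foldr_cons, List.map_cons, List.sum_cons] at ih ⊢
    rw [val_mul, ih]

lemma not_isGhost_prodList_iff (l : List T) : ¬IsGhost (prodList l) ↔ ∀ x ∈ l, ¬IsGhost x := by
  induction l with
  | nil => simp [prodList, IsGhost]
  | cons a l ih =>
    simp only [prodList, List.foldr_cons, List.forall_mem_cons] at ih ⊢
    rw [not_isGhost_mul_iff, ih]

section Det

variable {k : ℕ}

def permWeight (B : Matrix (Fin k) (Fin k) T) (σ : Equiv.Perm (Fin k)) : WithBot ℝ :=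
  ∑ i, val (B i (σ i))

lemma val_permProd (B : Matrix (Fin k) (Fin k) T) (σ : Equiv.Perm (Fin k)) :
    val (permProd B σ) = permWeight B σ := by
  rw [permProd, val_prodList, permWeight, Fin.sum_univ_def, List.map_map]
  rfl

lemma not_isGhost_permProd_iff {B : Matrix (Fin k) (Fin k) T} {σ : Equiv.Perm (Fin k)} :
    ¬IsGhost (permProd B σ) ↔ ∀ i, ¬IsGhost (B i (σ i)) := by
  simp [permProd, not_isGhost_prodList_iff]

theorem not_isGhost_det_iff {B : Matrix (Fin k) (Fin k) T} :
    ¬IsGhost (det B) ↔ ∃ σ, (∀ i, ¬IsGhost (B i (σ i))) ∧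
      ∀ τ, τ ≠ σ → permWeight B τ < permWeight B σ := by
  simp [det, not_isGhost_sum_iff, not_isGhost_permProd_iff, val_permProd]

lemma not_isGhost_det_of_val_eq {B B' : Matrix (Fin k) (Fin k) T}
    (hval : ∀ i j, val (B' i j) = val (B i j))
    (htan : ∀ i j, ¬IsGhost (B' i j) → ¬IsGhost (B i j)) (h : ¬IsGhost (det B')) :
    ¬IsGhost (det B) := by
  have hw : permWeight B' = permWeight B := by
    ext1 σ
    simp only [permWeight, hval]
  obtain ⟨σ, hσ, hmax⟩ := not_isGhost_det_iff.1 h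
  exact not_isGhost_det_iff.2 ⟨σ, fun i => htan _ _ (hσ i), by simpa only [hw] using hmax⟩

lemma exists_ne_one_permWeight_le {B : Matrix (Fin k) (Fin k) T}
    (hdiag : ∀ i, ¬IsGhost (B i i)) (hdet : IsGhost (det B)) :
    ∃ σ ≠ 1, permWeight B 1 ≤ permWeight B σ := by
  by_contra! h
  exact not_isGhost_det_iff.2 ⟨1, hdiag, h⟩ hdet

end Det

def ofWithBot : WithBot ℝ → T := WithBot.recBotCoe bot real

lemma val_ofWithBot (x : WithBot ℝ) : val (ofWithBot x) = x := by
  induction x using WithBot.recBotCoe <;> rfl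

lemma realOrBot_ofWithBot (x : WithBot ℝ) : RealOrBot (ofWithBot x) := by
  induction x using WithBot.recBotCoe <;> trivial

lemma ofWithBot_ne_bot {x : WithBot ℝ} (hx : x ≠ ⊥) : ofWithBot x ≠ bot := by
  induction x using WithBot.recBotCoe <;> simp_all [ofWithBot]

lemma ne_bot_of_not_isGhost_ofWithBot {x : WithBot ℝ} (hx : ¬IsGhost (ofWithBot x)) : x ≠ ⊥ := by
  rintro rfl
  exact hx trivial

variable {m n : ℕ} {A : Matrix (Fin m) (Fin n) T}

/-- Row `i` is the only row attaining the maximum in column `j` of the combination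
`⨁ᵢ βᵢ ⊙ Aᵢ`, and its entry there is tangible; equivalently that coordinate is tangible. -/
def TangibleMaxAt (A : Matrix (Fin m) (Fin n) T) (β : Fin m → WithBot ℝ) (i : Fin m)
    (j : Fin n) : Prop :=
  β i ≠ ⊥ ∧ ¬IsGhost (A i j) ∧ ∀ i', i' ≠ i → β i' + val (A i' j) < β i + val (A i j)

def IsGhostCombination (A : Matrix (Fin m) (Fin n) T) (β : Fin m → WithBot ℝ) : Prop :=
  (∃ i, β i ≠ ⊥) ∧ ∀ i j, ¬TangibleMaxAt A β i j

theorem dependent_of_isGhostCombination {β : Fin m → WithBot ℝ} (h : IsGhostCombination A β) :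
    Dependent A := by
  obtain ⟨⟨i₀, hi₀⟩, hβ⟩ := h
  refine ⟨fun i => ofWithBot (β i), fun i => realOrBot_ofWithBot _, ⟨i₀, ofWithBot_ne_bot hi₀⟩,
    fun j => by_contra fun hj => ?_⟩
  obtain ⟨i, -, hi, hmax⟩ := (not_isGhost_sum_iff _ _).1 hj
  rw [not_isGhost_mul_iff] at hi
  refine hβ i j ⟨ne_bot_of_not_isGhost_ofWithBot hi.1, hi.2, fun i' hi' => ?_⟩
  simpa only [val_mul, val_ofWithBot] using hmax i' (Finset.mem_univ _) hi'

lemma TangibleMaxAt.mono {β γ : Fin m → WithBot ℝ} {i : Fin m} {j : Fin n}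
    (h : TangibleMaxAt A γ i j) (hle : ∀ i', β i' ≤ γ i') (heq : β i = γ i) :
    TangibleMaxAt A β i j := by
  obtain ⟨hi, hA, hmax⟩ := h
  refine ⟨heq ▸ hi, hA, fun i' hi' => ?_⟩
  rw [heq]
  exact (add_le_add_left (hle i') _).trans_lt (hmax i' hi')

lemma tangibleMaxAt_const_add_iff {β : Fin m → WithBot ℝ} {i : Fin m} {j : Fin n} (t : ℝ) :
    TangibleMaxAt A (fun i => ↑t + β i) i j ↔ TangibleMaxAt A β i j := by
  simp only [TangibleMaxAt, add_assoc, WithBot.add_lt_add_iff_left WithBot.coe_ne_bot, ne_eq,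
    WithBot.add_eq_bot, WithBot.coe_ne_bot, false_or]

lemma IsGhostCombination.const_add {β : Fin m → WithBot ℝ} (h : IsGhostCombination A β) (t : ℝ) :
    IsGhostCombination A (fun i => ↑t + β i) := by
  obtain ⟨⟨i₀, hi₀⟩, hβ⟩ := h
  exact ⟨⟨i₀, by simpa using hi₀⟩, fun i j => by rw [tangibleMaxAt_const_add_iff]; exact hβ i j⟩

def tangibleEntries (A : Matrix (Fin m) (Fin n) T) : Set (Fin m × Fin n) :=
  {p | ¬IsGhost (A p.1 p.2)}

def ghostify (A : Matrix (Fin m) (Fin n) T) (r : Fin m) (c : Fin n) : Matrix (Fin m) (Fin n) T :=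
  fun i j => if i = r ∧ j = c then nu (A i j) else A i j

section Ghostify

variable {r : Fin m} {c : Fin n}

@[simp] lemma val_ghostify (i : Fin m) (j : Fin n) : val (ghostify A r c i j) = val (A i j) := by
  unfold ghostify; split_ifs <;> simp

lemma not_isGhost_of_not_isGhost_ghostify {i : Fin m} {j : Fin n}
    (h : ¬IsGhost (ghostify A r c i j)) : ¬IsGhost (A i j) := by
  unfold ghostify at h; split_ifs at h <;> simp_all

lemma ghostify_of_ne {i : Fin m} {j : Fin n} (h : ¬(i = r ∧ j = c)) : ghostify A r c i j = A i j :=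
  if_neg h

lemma tangibleEntries_ghostify_ssubset (h : ¬IsGhost (A r c)) :
    tangibleEntries (ghostify A r c) ⊂ tangibleEntries A := by
  refine Set.ssubset_iff_of_subset (fun p => not_isGhost_of_not_isGhost_ghostify) |>.2
    ⟨(r, c), h, fun hrc => hrc (by simp [ghostify])⟩

lemma TangibleMaxAt.ghostify {β : Fin m → WithBot ℝ} {i : Fin m} {j : Fin n}
    (h : TangibleMaxAt A β i j) (hne : ¬(i = r ∧ j = c)) :
    TangibleMaxAt (ghostify A r c) β i j := by
  obtain ⟨hi, hA, hmax⟩ := h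
  exact ⟨hi, by rwa [ghostify_of_ne hne], by simpa only [val_ghostify] using hmax⟩

lemma IsGhostCombination.eq_of_ghostify {β : Fin m → WithBot ℝ} {i : Fin m} {j : Fin n}
    (h : IsGhostCombination (ghostify A r c) β) (hij : TangibleMaxAt A β i j) : i = r ∧ j = c :=
  by_contra fun hne => h.2 i j (hij.ghostify hne)

lemma IsGhostCombination.of_ghostify {β : Fin m → WithBot ℝ}
    (h : IsGhostCombination (ghostify A r c) β) :
    IsGhostCombination A β ∨ TangibleMaxAt A β r c := by
  refine or_iff_not_imp_right.2 fun hrc => ⟨h.1, fun i j hij => hrc ?_⟩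
  obtain ⟨rfl, rfl⟩ := h.eq_of_ghostify hij
  exact hij

end Ghostify

def MinorsGhost (A : Matrix (Fin m) (Fin n) T) : Prop :=
  ∀ f : Fin m → Fin n, Function.Injective f → IsGhost (det (A.submatrix id f))

lemma MinorsGhost.ghostify (hA : MinorsGhost A) (r : Fin m) (c : Fin n) :
    MinorsGhost (ghostify A r c) := fun f hf => by_contra fun h =>
  not_isGhost_det_of_val_eq (fun i j => val_ghostify i (f j))
    (fun _ _ => not_isGhost_of_not_isGhost_ghostify) h (hA f hf)

lemma isGhostCombination_sup {r₁ r₂ : Fin m} {c₁ c₂ : Fin n} {β₁ β₂ : Fin m → WithBot ℝ}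
    (h₁ : IsGhostCombination (ghostify A r₁ c₁) β₁)
    (h₂ : IsGhostCombination (ghostify A r₂ c₂) β₂)
    (H₁ : TangibleMaxAt A (β₁ ⊔ β₂) r₁ c₁ → β₂ r₁ ≤ β₁ r₁ → False)
    (H₂ : TangibleMaxAt A (β₁ ⊔ β₂) r₂ c₂ → β₁ r₂ ≤ β₂ r₂ → False) :
    IsGhostCombination A (β₁ ⊔ β₂) := by
  obtain ⟨i₀, hi₀⟩ := h₁.1
  refine ⟨⟨i₀, ne_bot_of_le_ne_bot hi₀ le_sup_left⟩, fun i j hij => ?_⟩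
  rcases le_total (β₂ i) (β₁ i) with hle | hle
  · obtain ⟨rfl, rfl⟩ :=
      h₁.eq_of_ghostify (hij.mono (fun _ => le_sup_left) (sup_eq_left.2 hle).symm)
    exact H₁ hij hle
  · obtain ⟨rfl, rfl⟩ :=
      h₂.eq_of_ghostify (hij.mono (fun _ => le_sup_right) (sup_eq_right.2 hle).symm)
    exact H₂ hij hle

lemma exists_isGhostCombination_of_col {r₁ r₂ : Fin m} {c : Fin n} {β₁ β₂ : Fin m → WithBot ℝ}
    (hr : r₁ ≠ r₂)
    (h₁ : IsGhostCombination (ghostify A r₁ c) β₁) (hv₁ : TangibleMaxAt A β₁ r₁ c)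
    (h₂ : IsGhostCombination (ghostify A r₂ c) β₂) (hv₂ : TangibleMaxAt A β₂ r₂ c) :
    ∃ γ, IsGhostCombination A γ := by
  obtain ⟨t, ht⟩ := WithBot.exists_coe_add_eq
    (WithBot.add_ne_bot.2 ⟨hv₁.1, val_ne_bot_of_not_isGhost hv₁.2.1⟩)
    (WithBot.add_ne_bot.2 ⟨hv₂.1, val_ne_bot_of_not_isGhost hv₂.2.1⟩)
  rw [← add_assoc] at ht
  set β₁' : Fin m → WithBot ℝ := fun i => ↑t + β₁ i
  -- `β₁'` at row `r₁` and `β₂` at row `r₂` reach the same value in column `c`, so neither row is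
  -- a strict maximum of the sup there
  refine ⟨β₁' ⊔ β₂, isGhostCombination_sup (h₁.const_add t) h₂ (fun hγ hle => ?_)
    (fun hγ hle => ?_)⟩
  · refine (hγ.2.2 r₂ hr.symm).not_ge ?_
    calc (β₁' ⊔ β₂) r₁ + val (A r₁ c) = β₂ r₂ + val (A r₂ c) := by
          rw [Pi.sup_apply, sup_eq_left.2 hle, ht]
      _ ≤ (β₁' ⊔ β₂) r₂ + val (A r₂ c) := add_le_add_left le_sup_right _
  · refine (hγ.2.2 r₁ hr).not_ge ?_
    calc (β₁' ⊔ β₂) r₂ + val (A r₂ c) = β₁' r₁ + val (A r₁ c) := by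
          rw [Pi.sup_apply, sup_eq_right.2 hle, ht]
      _ ≤ (β₁' ⊔ β₂) r₁ + val (A r₁ c) := add_le_add_left le_sup_left _

lemma exists_isGhostCombination_of_row {r : Fin m} {c₁ c₂ : Fin n} {β₁ β₂ : Fin m → WithBot ℝ}
    (hc : c₁ ≠ c₂)
    (h₁ : IsGhostCombination (ghostify A r c₁) β₁) (hv₁ : TangibleMaxAt A β₁ r c₁)
    (h₂ : IsGhostCombination (ghostify A r c₂) β₂) (hv₂ : TangibleMaxAt A β₂ r c₂) :
    ∃ γ, IsGhostCombination A γ := by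
  obtain ⟨t, ht⟩ := WithBot.exists_coe_add_eq hv₁.1 hv₂.1
  set β₁' : Fin m → WithBot ℝ := fun i => ↑t + β₁ i
  have h₁' := h₁.const_add t
  -- `β₁'` and `β₂` agree at row `r`, so a tangible maximum of `β₁' ⊔ β₂` in row `r` is also
  -- one of `β₁'` and one of `β₂`
  refine ⟨β₁' ⊔ β₂, isGhostCombination_sup h₁' h₂ (fun hγ _ => ?_) (fun hγ _ => ?_)⟩
  · exact hc (h₂.eq_of_ghostify (hγ.mono (fun _ => le_sup_right) (by simp [β₁', ht]))).2
  · exact hc (h₁'.eq_of_ghostify (hγ.mono (fun _ => le_sup_left) (by simp [β₁', ht]))).2.symm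

lemma isGhostCombination_of_isGhost_row {i₀ : Fin m} (h : ∀ j, IsGhost (A i₀ j)) :
    IsGhostCombination A (fun i => if i = i₀ then 0 else ⊥) := by
  refine ⟨⟨i₀, by simp⟩, fun i j ⟨hi, hA, _⟩ => ?_⟩
  obtain rfl : i = i₀ := by by_contra hne; simp [hne] at hi
  exact hA (h j)

lemma exists_real_of_permWeight_le {k : ℕ} {B : Matrix (Fin k) (Fin k) T}
    {σ : Equiv.Perm (Fin k)} (hdiag : ∀ i, ¬IsGhost (B i i))
    (hσ : permWeight B 1 ≤ permWeight B σ) :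
    ∃ d w : Fin k → ℝ, (∀ i, val (B i i) = d i) ∧ (∀ i, val (B i (σ i)) = w i) ∧
      ∑ i, d i ≤ ∑ i, w i := by
  have hd : ∀ i, val (B i i) ≠ ⊥ := fun i => val_ne_bot_of_not_isGhost (hdiag i)
  have hw : ∀ i, val (B i (σ i)) ≠ ⊥ := by
    have h1 : permWeight B 1 ≠ ⊥ := by
      simpa [permWeight, WithBot.sum_eq_bot_iff] using hd
    simpa [permWeight, WithBot.sum_eq_bot_iff] using ne_bot_of_le_ne_bot h1 hσ
  refine ⟨fun i => (val (B i i)).unbot (hd i), fun i => (val (B i (σ i))).unbot (hw i),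
    fun i => (WithBot.coe_unbot _ _).symm, fun i => (WithBot.coe_unbot _ _).symm, ?_⟩
  rw [← WithBot.coe_le_coe]
  simpa [permWeight, WithBot.coe_sum] using hσ

lemma exists_isGhostCombination_of_not_isGhost_iff (c : Fin m → Fin n)
    (hc : ∀ i j, ¬IsGhost (A i j) ↔ j = c i) (hdet : IsGhost (det (A.submatrix id c))) :
    ∃ β, IsGhostCombination A β := by
  classical
  have hdiag : ∀ i, ¬IsGhost (A.submatrix id c i i) := fun i => (hc i (c i)).2 rfl
  obtain ⟨σ, hσ1, hσ⟩ := exists_ne_one_permWeight_le hdiag hdet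
  obtain ⟨d, w, hd, hw, hsum⟩ := exists_real_of_permWeight_le hdiag hσ
  obtain ⟨P, p, ⟨x, hx⟩, hPσ, hmoved, hp⟩ :=
    σ.exists_potential_of_sum_nonneg hσ1 (fun i => w i - d (σ i))
      (fun i hi => by
        have h := hw i
        rw [hi, hd, WithBot.coe_inj] at h
        rw [hi, h, sub_self])
      (by rw [Finset.sum_sub_distrib, Equiv.sum_comp σ d]; linarith)
  refine ⟨fun i => if P i then ↑(p i) else ⊥, ⟨x, by simp [hx]⟩, fun i j ⟨hi, hA, hmax⟩ => ?_⟩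
  have hPi : P i := by by_contra h; simp [h] at hi
  obtain rfl := (hc i j).1 hA
  -- the row `σ⁻¹ i` ties with row `i` in column `c i`
  set i' := σ.symm i
  have hσi' : σ i' = i := σ.apply_symm_apply i
  have hPi' : P i' := (hPσ i').1 (hσi' ▸ hPi)
  have hne : i' ≠ i := fun h => hmoved i hPi (by rwa [h] at hσi')
  have hlt : ((p i' + w i' : ℝ) : WithBot ℝ) < ↑(p i + d i) := by
    have := hmax i' hne
    simp only [hPi, hPi', if_true] at this
    have hwi' := hw i'
    rw [hσi'] at hwi'
    simpa [← hd, ← hwi'] using this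
  have := hp i' hPi'
  rw [hσi'] at this
  norm_cast at hlt
  linarith

theorem exists_isGhostCombination_of_minorsGhost (hA : MinorsGhost A) :
    ∃ β, IsGhostCombination A β := by
  induction hN : (tangibleEntries A).ncard
    using Nat.strong_induction_on generalizing A with
  | _ N ih =>
  subst hN
  have step : ∀ r c, ¬IsGhost (A r c) → (∃ β, IsGhostCombination A β) ∨
      ∃ β, IsGhostCombination (ghostify A r c) β ∧ TangibleMaxAt A β r c := fun r c h => by
    obtain ⟨β, hβ⟩ := ih _ (Set.ncard_lt_ncard (tangibleEntries_ghostify_ssubset h))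
      (hA.ghostify r c) rfl
    exact hβ.of_ghostify.imp (⟨β, ·⟩) (⟨β, hβ, ·⟩)
  by_cases hrow : ∃ i, ∀ j, IsGhost (A i j)
  · obtain ⟨i, hi⟩ := hrow
    exact ⟨_, isGhostCombination_of_isGhost_row hi⟩
  by_cases hcol : ∃ c r₁ r₂, r₁ ≠ r₂ ∧ ¬IsGhost (A r₁ c) ∧ ¬IsGhost (A r₂ c)
  · obtain ⟨c, r₁, r₂, hr, h₁, h₂⟩ := hcol
    obtain hA | ⟨β₁, hβ₁, hv₁⟩ := step r₁ c h₁
    · exact hA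
    obtain hA | ⟨β₂, hβ₂, hv₂⟩ := step r₂ c h₂
    · exact hA
    exact exists_isGhostCombination_of_col hr hβ₁ hv₁ hβ₂ hv₂
  by_cases hrow₂ : ∃ r c₁ c₂, c₁ ≠ c₂ ∧ ¬IsGhost (A r c₁) ∧ ¬IsGhost (A r c₂)
  · obtain ⟨r, c₁, c₂, hc, h₁, h₂⟩ := hrow₂
    obtain hA | ⟨β₁, hβ₁, hv₁⟩ := step r c₁ h₁
    · exact hA
    obtain hA | ⟨β₂, hβ₂, hv₂⟩ := step r c₂ h₂
    · exact hA
    exact exists_isGhostCombination_of_row hc hβ₁ hv₁ hβ₂ hv₂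
  push Not at hrow
  choose c hc using hrow
  have hc' : ∀ i j, ¬IsGhost (A i j) ↔ j = c i := fun i j =>
    ⟨fun h => by_contra fun hne => hrow₂ ⟨i, j, c i, hne, h, hc i⟩, fun h => h ▸ hc i⟩
  have hinj : Function.Injective c := fun i₁ i₂ h =>
    by_contra fun hne => hcol ⟨c i₁, i₁, i₂, hne, hc i₁, h ▸ hc i₂⟩
  exact exists_isGhostCombination_of_not_isGhost_iff c hc' (hA c hinj)

end T

theorem stmt17_general {m n : ℕ} (A : Matrix (Fin m) (Fin n) T)
    (hind : ¬ T.Dependent (fun i j => A i j)) :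
    ∃ f : Fin m → Fin n, Function.Injective f ∧
      ¬ T.IsGhost (T.det (A.submatrix id f)) := by
  by_contra! h
  obtain ⟨β, hβ⟩ := T.exists_isGhostCombination_of_minorsGhost h
  exact hind (T.dependent_of_isGhostCombination hβ)

/-- an `m × n` matrix (`m ≤ n`) with tropically independent rows
has a tropically nonsingular `m × m` submatrix. -/
theorem stmt17 {m n : ℕ} (hmn : m ≤ n) (A : Matrix (Fin m) (Fin n) T)
    (hind : ¬ T.Dependent (fun i j => A i j)) :
    ∃ f : Fin m → Fin n, Function.Injective f ∧
      ¬ T.IsGhost (T.det (A.submatrix id f)) :=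
  stmt17_general A hind
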